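/- Let N be a positive integer and let m, n, p, q be real numbers with m + q < n + p. Let a, b, c, d : ℝ^N × ℝ^N → ℂ be functions for which there exists a constant C > 0 such that |a(x,ξ)| ≤ C⟨ξ⟩^m, |b(x,ξ)| ≤ C⟨ξ⟩^n, |c(x,ξ)| ≤ C⟨ξ⟩^p and |d(x,ξ)| ≤ C⟨ξ⟩^q for all (x,ξ) ∈ ℝ^N × ℝ^N. Then the following are equivalent: (1) there exist c₀ > 0 and R ≥ 1 such that |a(x,ξ)d(x,ξ) − b(x,ξ)c(x,ξ)| ≥ c₀⟨ξ⟩^{n+p} for all x ∈ ℝ^N and all ξ with |ξ| ≥ R; (2) there exist c₁ > 0 and R′ ≥ 1 such that |b(x,ξ)| ≥ c₁⟨ξ⟩^n and |c(x,ξ)| ≥ c₁⟨ξ⟩^p for all x ∈ ℝ^N and all ξ with |ξ| ≥ R′. -/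
import Mathlib


/-- The Japanese bracket `⟨ξ⟩ = (1 + |ξ|²)^{1/2}` on `ℝ^N`. -/
noncomputable def jbracket {N : ℕ} (ξ : EuclideanSpace ℝ (Fin N)) : ℝ :=
  Real.sqrt (1 + ‖ξ‖ ^ 2)

lemma jb_ge_one {N : ℕ} (ξ : EuclideanSpace ℝ (Fin N)) : 1 ≤ jbracket ξ := by
  unfold jbracket
  have := Real.sqrt_le_sqrt (show (1:ℝ) ≤ 1 + ‖ξ‖ ^ 2 by nlinarith [sq_nonneg ‖ξ‖])
  simpa using this

lemma jb_pos {N : ℕ} (ξ : EuclideanSpace ℝ (Fin N)) : 0 < jbracket ξ :=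
  lt_of_lt_of_le one_pos (jb_ge_one ξ)

lemma jb_ge_norm {N : ℕ} (ξ : EuclideanSpace ℝ (Fin N)) : ‖ξ‖ ≤ jbracket ξ := by
  unfold jbracket
  have := Real.sqrt_le_sqrt (show ‖ξ‖ ^ 2 ≤ 1 + ‖ξ‖ ^ 2 by linarith)
  rwa [Real.sqrt_sq (norm_nonneg ξ)] at this

lemma key_rpow (t K δ : ℝ) (hK : 0 < K) (hδ : 0 < δ)
    (ht1 : 1 ≤ t) (ht : K ^ (1/δ) ≤ t) : K ≤ t ^ δ := by
  have h0 : (0:ℝ) ≤ K ^ (1/δ) := Real.rpow_nonneg hK.le _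
  have := Real.rpow_le_rpow h0 ht hδ.le
  rwa [← Real.rpow_mul hK.le, one_div_mul_cancel hδ.ne', Real.rpow_one] at this

/-- For `m + q < n + p`, uniform Douglis–Nirenberg ellipticity of the symbol matrix
`(a, b; c, d)` is equivalent to uniform ellipticity of both off-diagonal entries `b` and `c`. -/
theorem ellipticity_equiv_offdiagonal
    (N : ℕ) (hN : 0 < N) (m n p q : ℝ) (hmq : m + q < n + p)
    (a b c d : EuclideanSpace ℝ (Fin N) → EuclideanSpace ℝ (Fin N) → ℂ)
    (C : ℝ) (hC : 0 < C)
    (ha : ∀ x ξ, ‖a x ξ‖ ≤ C * jbracket ξ ^ m)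
    (hb : ∀ x ξ, ‖b x ξ‖ ≤ C * jbracket ξ ^ n)
    (hc : ∀ x ξ, ‖c x ξ‖ ≤ C * jbracket ξ ^ p)
    (hd : ∀ x ξ, ‖d x ξ‖ ≤ C * jbracket ξ ^ q) :
    (∃ c₀ > (0 : ℝ), ∃ R ≥ (1 : ℝ), ∀ x ξ, R ≤ ‖ξ‖ →
        c₀ * jbracket ξ ^ (n + p) ≤ ‖a x ξ * d x ξ - b x ξ * c x ξ‖) ↔
    (∃ c₁ > (0 : ℝ), ∃ R' ≥ (1 : ℝ), ∀ x ξ, R' ≤ ‖ξ‖ →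
        c₁ * jbracket ξ ^ n ≤ ‖b x ξ‖ ∧ c₁ * jbracket ξ ^ p ≤ ‖c x ξ‖) := by
  have hδ : 0 < n + p - (m + q) := by linarith
  constructor
  · rintro ⟨c₀, hc₀, R, hR, h⟩
    have hK : (0:ℝ) < 2 * C ^ 2 / c₀ := by positivity
    refine ⟨c₀ / (2 * C), by positivity,
      max R (max 1 ((2 * C ^ 2 / c₀) ^ (1 / (n + p - (m + q))))),
      le_trans hR (le_max_left _ _), fun x ξ hξ => ?_⟩
    set t := jbracket ξ with ht
    have ht1 : 1 ≤ t := jb_ge_one ξ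
    have ht0 : 0 < t := jb_pos ξ
    have htn : ‖ξ‖ ≤ t := jb_ge_norm ξ
    have hKle : 2 * C ^ 2 / c₀ ≤ t ^ (n + p - (m + q)) :=
      key_rpow t _ _ hK hδ ht1
        (le_trans (le_trans (le_max_right _ _) (le_trans (le_max_right _ _) hξ)) htn)
    -- main estimate
    have h1 := h x ξ (le_trans (le_max_left _ _) hξ)
    have hub : ‖a x ξ * d x ξ - b x ξ * c x ξ‖ ≤ C ^ 2 * t ^ (m + q) + ‖b x ξ‖ * ‖c x ξ‖ := by
      calc ‖a x ξ * d x ξ - b x ξ * c x ξ‖ ≤ ‖a x ξ * d x ξ‖ + ‖b x ξ * c x ξ‖ :=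
            norm_sub_le _ _
        _ = ‖a x ξ‖ * ‖d x ξ‖ + ‖b x ξ‖ * ‖c x ξ‖ := by rw [norm_mul, norm_mul]
        _ ≤ (C * t ^ m) * (C * t ^ q) + ‖b x ξ‖ * ‖c x ξ‖ := by
            have h1 := ha x ξ; have h2 := hd x ξ; gcongr
        _ = C ^ 2 * (t ^ m * t ^ q) + ‖b x ξ‖ * ‖c x ξ‖ := by ring
        _ = C ^ 2 * t ^ (m + q) + ‖b x ξ‖ * ‖c x ξ‖ := by
            rw [← Real.rpow_add ht0]
    have hsmall : C ^ 2 * t ^ (m + q) ≤ (c₀ / 2) * t ^ (n + p) := by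
      have : t ^ (n + p) = t ^ (m + q) * t ^ (n + p - (m + q)) := by
        rw [← Real.rpow_add ht0]; ring_nf
      rw [this]
      have htmq : 0 < t ^ (m + q) := Real.rpow_pos_of_pos ht0 _
      have := mul_le_mul_of_nonneg_left hKle htmq.le
      calc C ^ 2 * t ^ (m + q) = (c₀ / 2) * (t ^ (m + q) * (2 * C ^ 2 / c₀)) := by
            field_simp
        _ ≤ (c₀ / 2) * (t ^ (m + q) * t ^ (n + p - (m + q))) := by
            gcongr
    have hbc : (c₀ / 2) * t ^ (n + p) ≤ ‖b x ξ‖ * ‖c x ξ‖ := by nlinarith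
    have hsplit : t ^ (n + p) = t ^ n * t ^ p := Real.rpow_add ht0 n p
    have htp : 0 < t ^ p := Real.rpow_pos_of_pos ht0 _
    have htn' : 0 < t ^ n := Real.rpow_pos_of_pos ht0 _
    constructor
    · -- ‖b‖ ≥ (c₀/(2C)) t^n
      have hcub := hc x ξ
      have : (c₀ / 2) * (t ^ n * t ^ p) ≤ ‖b x ξ‖ * (C * t ^ p) := by
        calc (c₀ / 2) * (t ^ n * t ^ p) = (c₀ / 2) * t ^ (n + p) := by rw [hsplit]
          _ ≤ ‖b x ξ‖ * ‖c x ξ‖ := hbc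
          _ ≤ ‖b x ξ‖ * (C * t ^ p) := by gcongr
      rw [div_mul_eq_mul_div, div_le_iff₀ (by positivity)]
      nlinarith
    · have hbub := hb x ξ
      have : (c₀ / 2) * (t ^ n * t ^ p) ≤ ‖c x ξ‖ * (C * t ^ n) := by
        calc (c₀ / 2) * (t ^ n * t ^ p) = (c₀ / 2) * t ^ (n + p) := by rw [hsplit]
          _ ≤ ‖b x ξ‖ * ‖c x ξ‖ := hbc
          _ ≤ (C * t ^ n) * ‖c x ξ‖ := by gcongr
          _ = ‖c x ξ‖ * (C * t ^ n) := by ring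
      rw [div_mul_eq_mul_div, div_le_iff₀ (by positivity)]
      nlinarith
  · rintro ⟨c₁, hc₁, R', hR', h⟩
    have hK : (0:ℝ) < 2 * C ^ 2 / c₁ ^ 2 := by positivity
    refine ⟨c₁ ^ 2 / 2, by positivity,
      max R' (max 1 ((2 * C ^ 2 / c₁ ^ 2) ^ (1 / (n + p - (m + q))))),
      le_trans hR' (le_max_left _ _), fun x ξ hξ => ?_⟩
    set t := jbracket ξ with ht
    have ht1 : 1 ≤ t := jb_ge_one ξ
    have ht0 : 0 < t := jb_pos ξ
    have htn : ‖ξ‖ ≤ t := jb_ge_norm ξ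
    have hKle : 2 * C ^ 2 / c₁ ^ 2 ≤ t ^ (n + p - (m + q)) :=
      key_rpow t _ _ hK hδ ht1
        (le_trans (le_trans (le_max_right _ _) (le_trans (le_max_right _ _) hξ)) htn)
    obtain ⟨hb1, hc1⟩ := h x ξ (le_trans (le_max_left _ _) hξ)
    have hsplit : t ^ (n + p) = t ^ n * t ^ p := Real.rpow_add ht0 n p
    have htp : 0 < t ^ p := Real.rpow_pos_of_pos ht0 _
    have htn' : 0 < t ^ n := Real.rpow_pos_of_pos ht0 _
    have hbc : c₁ ^ 2 * t ^ (n + p) ≤ ‖b x ξ * c x ξ‖ := by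
      rw [norm_mul, hsplit]
      calc c₁ ^ 2 * (t ^ n * t ^ p) = (c₁ * t ^ n) * (c₁ * t ^ p) := by ring
        _ ≤ ‖b x ξ‖ * ‖c x ξ‖ := by gcongr <;> positivity
    have had : ‖a x ξ * d x ξ‖ ≤ (c₁ ^ 2 / 2) * t ^ (n + p) := by
      have hsmall : C ^ 2 * t ^ (m + q) ≤ (c₁ ^ 2 / 2) * t ^ (n + p) := by
        have heq : t ^ (n + p) = t ^ (m + q) * t ^ (n + p - (m + q)) := by
          rw [← Real.rpow_add ht0]; ring_nf
        rw [heq]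
        have htmq : 0 < t ^ (m + q) := Real.rpow_pos_of_pos ht0 _
        calc C ^ 2 * t ^ (m + q) = (c₁ ^ 2 / 2) * (t ^ (m + q) * (2 * C ^ 2 / c₁ ^ 2)) := by
              field_simp
          _ ≤ (c₁ ^ 2 / 2) * (t ^ (m + q) * t ^ (n + p - (m + q))) := by gcongr
      calc ‖a x ξ * d x ξ‖ = ‖a x ξ‖ * ‖d x ξ‖ := norm_mul _ _
        _ ≤ (C * t ^ m) * (C * t ^ q) := by
            have h1 := ha x ξ; have h2 := hd x ξ; gcongr
        _ = C ^ 2 * (t ^ m * t ^ q) := by ring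
        _ = C ^ 2 * t ^ (m + q) := by rw [← Real.rpow_add ht0]
        _ ≤ (c₁ ^ 2 / 2) * t ^ (n + p) := hsmall
    calc (c₁ ^ 2 / 2) * t ^ (n + p)
        = c₁ ^ 2 * t ^ (n + p) - (c₁ ^ 2 / 2) * t ^ (n + p) := by ring
      _ ≤ ‖b x ξ * c x ξ‖ - ‖a x ξ * d x ξ‖ := by gcongr
      _ ≤ ‖b x ξ * c x ξ - a x ξ * d x ξ‖ := norm_sub_norm_le _ _
      _ = ‖a x ξ * d x ξ - b x ξ * c x ξ‖ := norm_sub_rev _ _
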